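/- arXiv:1210.2845 — 2 statements merged into one kernel-verified Lean document; each statement's English description precedes it below -/
import Mathlib

section
/- (Helstrom bound.) Let ρ_1 and ρ_2 be density matrices on ℂ^d and let q_1, q_2 ≥ 0 with q_1 + q_2 = 1. Then the maximum of q_1 tr(M_1 ρ_1) + q_2 tr(M_2 ρ_2) over all pairs of positive semidefinite matrices M_1, M_2 with M_1 + M_2 = I equals (1 + ‖q_1 ρ_1 − q_2 ρ_2‖₁)/2, and this maximum is attained. -/
open BigOperators Matrix
open scoped ComplexOrder

/-- A density matrix: positive semidefinite with trace 1. -/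
def IsDensityMatrix {d : ℕ} (ρ : Matrix (Fin d) (Fin d) ℂ) : Prop :=
  ρ.PosSemidef ∧ ρ.trace = 1

/-- The trace norm `‖A‖₁ = tr √(Aᴴ A)`. -/
noncomputable def traceNorm {d : ℕ} (A : Matrix (Fin d) (Fin d) ℂ) : ℝ :=
  (((Matrix.posSemidef_conjTranspose_mul_self A).1.eigenvectorUnitary : Matrix (Fin d) (Fin d) ℂ) *
    Matrix.diagonal (((↑) : ℝ → ℂ) ∘ Real.sqrt ∘ (Matrix.posSemidef_conjTranspose_mul_self A).1.eigenvalues) *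
    (star (Matrix.posSemidef_conjTranspose_mul_self A).1.eigenvectorUnitary :
      Matrix (Fin d) (Fin d) ℂ)).trace.re

/-!
Write `Δ = q₁ρ₁ - q₂ρ₂` with eigenvalues `λᵢ`. Since `M₂ = 1 - M₁`, the objective is
`q₂ + Re tr(M₁Δ)`, and `0 ≤ M₁ ≤ 1` forces `Re tr(M₁Δ) ≤ tr Δ⁺ = ∑ max(λᵢ, 0)`: split
`Δ = Δ⁺ - Δ⁻` and use that the trace of a product of positive semidefinite matrices is nonnegative.
The projection onto the nonnegative eigenspaces of `Δ` attains this value, and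
`∑ max(λᵢ, 0) = (tr Δ + ∑ |λᵢ|) / 2 = (q₁ - q₂ + ‖Δ‖₁) / 2`.
-/

open scoped MatrixOrder

namespace Matrix

variable {n 𝕜 : Type*} [Fintype n] [RCLike 𝕜]

lemma PosSemidef.trace_mul_nonneg {A B : Matrix n n 𝕜} (hA : A.PosSemidef) (hB : B.PosSemidef) :
    0 ≤ (A * B).trace := by
  classical
  obtain ⟨S, hS, rfl⟩ : ∃ S : Matrix n n 𝕜, Sᴴ = S ∧ B = S * S :=
    ⟨CFC.sqrt B, (CFC.sqrt_nonneg B).isSelfAdjoint, (CFC.sqrt_mul_sqrt_self B hB.nonneg).symm⟩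
  rw [← mul_assoc, trace_mul_comm, ← mul_assoc]
  simpa [hS] using (hA.conjTranspose_mul_mul_same S).trace_nonneg

lemma PosSemidef.re_trace_mul_nonneg {A B : Matrix n n 𝕜} (hA : A.PosSemidef)
    (hB : B.PosSemidef) : 0 ≤ RCLike.re (A * B).trace :=
  (RCLike.nonneg_iff.mp (hA.trace_mul_nonneg hB)).1

variable [DecidableEq n] {A : Matrix n n 𝕜}

namespace IsHermitian

lemma trace_cfc (hA : A.IsHermitian) (f : ℝ → ℝ) :
    (cfc f A).trace = ∑ i, (f (hA.eigenvalues i) : 𝕜) := by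
  rw [hA.cfc_eq, IsHermitian.cfc, Unitary.conjStarAlgAut_apply, trace_mul_cycle,
    Unitary.coe_star_mul_self, one_mul, trace_diagonal]
  rfl

lemma re_trace_cfc (hA : A.IsHermitian) (f : ℝ → ℝ) :
    RCLike.re (cfc f A).trace = ∑ i, f (hA.eigenvalues i) := by
  simp [hA.trace_cfc]

lemma eq_cfc_max_sub_cfc_max (hA : A.IsHermitian) :
    A = cfc (fun x : ℝ ↦ max x 0) A - cfc (fun x : ℝ ↦ max (-x) 0) A := by
  rw [← cfc_sub (fun x : ℝ ↦ max x 0) (fun x : ℝ ↦ max (-x) 0) A]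
  conv_lhs => rw [← cfc_id' ℝ A]
  congr
  funext x
  rcases le_total 0 x with h | h <;> simp [h]

lemma re_trace_mul_le_sum_max_eigenvalues_zero (hA : A.IsHermitian) {M : Matrix n n 𝕜}
    (hM : M.PosSemidef) (hM' : (1 - M).PosSemidef) :
    RCLike.re (M * A).trace ≤ ∑ i, max (hA.eigenvalues i) 0 := by
  set P := cfc (fun x : ℝ ↦ max x 0) A
  set N := cfc (fun x : ℝ ↦ max (-x) 0) A
  have hP : P.PosSemidef := (cfc_nonneg fun x _ ↦ le_max_right x 0).posSemidef
  have hN : N.PosSemidef := (cfc_nonneg fun x _ ↦ le_max_right (-x) 0).posSemidef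
  have hMA : M * A = P - (1 - M) * P - M * N := by
    rw [hA.eq_cfc_max_sub_cfc_max]
    noncomm_ring
  have hMP := hM'.re_trace_mul_nonneg hP
  have hMN := hM.re_trace_mul_nonneg hN
  rw [hMA, trace_sub, trace_sub, map_sub, map_sub, hA.re_trace_cfc]
  linarith

lemma exists_re_trace_mul_eq_sum_max_eigenvalues_zero (hA : A.IsHermitian) :
    ∃ P : Matrix n n 𝕜, P.PosSemidef ∧ (1 - P).PosSemidef ∧
      RCLike.re (P * A).trace = ∑ i, max (hA.eigenvalues i) 0 := by
  set ind : ℝ → ℝ := fun x ↦ if 0 ≤ x then 1 else 0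
  refine ⟨cfc ind A, (cfc_nonneg fun x _ ↦ by positivity).posSemidef,
    le_iff.mp (cfc_le_one _ _ fun x _ ↦ by simp only [ind]; split_ifs <;> norm_num), ?_⟩
  have hPA : cfc ind A * A = cfc (fun x : ℝ ↦ max x 0) A := by
    conv_lhs => rhs; rw [← cfc_id' ℝ A]
    rw [← cfc_mul _ _ A (A.finite_real_spectrum.continuousOn _)]
    congr
    funext x
    simp only [ind]
    split_ifs with h <;> simp [h]
    linarith
  rw [hPA, hA.re_trace_cfc]

end IsHermitian

end Matrix

section TraceNorm

variable {d : ℕ}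

lemma traceNorm_eq_re_trace_cfc_sqrt (A : Matrix (Fin d) (Fin d) ℂ) :
    traceNorm A = (cfc Real.sqrt (Aᴴ * A)).trace.re := by
  rw [traceNorm, (posSemidef_conjTranspose_mul_self A).1.cfc_eq, IsHermitian.cfc,
    Unitary.conjStarAlgAut_apply]
  rfl

lemma Matrix.IsHermitian.traceNorm_eq_sum_abs_eigenvalues {A : Matrix (Fin d) (Fin d) ℂ}
    (hA : A.IsHermitian) :
    traceNorm A = ∑ i, |hA.eigenvalues i| := by
  have habs : cfc Real.sqrt (Aᴴ * A) = cfc (fun x : ℝ ↦ |x|) A := by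
    rw [hA.eq, ← pow_two, ← cfc_comp_pow Real.sqrt 2 A]
    congr
    funext x
    exact Real.sqrt_sq_eq_abs x
  rw [traceNorm_eq_re_trace_cfc_sqrt, habs, ← RCLike.re_to_complex, hA.re_trace_cfc]

lemma Matrix.IsHermitian.sum_max_eigenvalues_zero {A : Matrix (Fin d) (Fin d) ℂ}
    (hA : A.IsHermitian) :
    ∑ i, max (hA.eigenvalues i) 0 = (A.trace.re + traceNorm A) / 2 := by
  have hmax (x : ℝ) : max x 0 = (x + |x|) / 2 := by
    rcases le_total 0 x with h | h <;> simp [h, abs_of_nonneg, abs_of_nonpos]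
  rw [hA.traceNorm_eq_sum_abs_eigenvalues, hA.trace_eq_sum_eigenvalues, Complex.re_sum]
  simp [hmax, ← Finset.sum_div, Finset.sum_add_distrib]

end TraceNorm

lemma mul_re_trace_add_mul_re_trace_eq {n : Type*} [Fintype n] [DecidableEq n]
    {M₁ M₂ ρ₁ ρ₂ : Matrix n n ℂ} (q₁ q₂ : ℝ) (hM : M₁ + M₂ = 1) (hρ₂ : ρ₂.trace = 1) :
    q₁ * (M₁ * ρ₁).trace.re + q₂ * (M₂ * ρ₂).trace.re =
      q₂ + (M₁ * ((q₁ : ℂ) • ρ₁ - (q₂ : ℂ) • ρ₂)).trace.re := by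
  obtain rfl : M₂ = 1 - M₁ := by rw [← hM, add_sub_cancel_left]
  simp only [mul_sub, sub_mul, Matrix.mul_smul, one_mul, trace_sub, trace_smul, hρ₂,
    smul_eq_mul, Complex.sub_re, Complex.re_ofReal_mul, Complex.one_re]
  ring

theorem helstrom_bound_general
    (d : ℕ) (ρ₁ ρ₂ : Matrix (Fin d) (Fin d) ℂ)
    (hρ₁ : IsDensityMatrix ρ₁) (hρ₂ : IsDensityMatrix ρ₂)
    (q₁ q₂ : ℝ) (hq : q₁ + q₂ = 1) :
    IsGreatest {v : ℝ | ∃ M₁ M₂ : Matrix (Fin d) (Fin d) ℂ,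
        M₁.PosSemidef ∧ M₂.PosSemidef ∧ M₁ + M₂ = 1 ∧
        v = q₁ * ((M₁ * ρ₁).trace).re + q₂ * ((M₂ * ρ₂).trace).re}
      ((1 + traceNorm ((q₁ : ℂ) • ρ₁ - (q₂ : ℂ) • ρ₂)) / 2) := by
  set Δ := (q₁ : ℂ) • ρ₁ - (q₂ : ℂ) • ρ₂ with hΔdef
  have hΔ : Δ.IsHermitian := by
    simp [Δ, IsHermitian, conjTranspose_sub, conjTranspose_smul, hρ₁.1.1.eq, hρ₂.1.1.eq]
  have htarget : (1 + traceNorm Δ) / 2 = q₂ + ∑ i, max (hΔ.eigenvalues i) 0 := by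
    have htrace : Δ.trace.re = q₁ - q₂ := by
      simp [Δ, trace_sub, trace_smul, hρ₁.2, hρ₂.2]
    rw [hΔ.sum_max_eigenvalues_zero, htrace]
    linarith
  constructor
  · obtain ⟨P, hP, hP', hPΔ⟩ := hΔ.exists_re_trace_mul_eq_sum_max_eigenvalues_zero
    refine ⟨P, 1 - P, hP, hP', add_sub_cancel P 1, ?_⟩
    rw [mul_re_trace_add_mul_re_trace_eq q₁ q₂ (add_sub_cancel P 1) hρ₂.2, ← hΔdef,
      ← RCLike.re_to_complex, hPΔ, htarget]
  · rintro _ ⟨M₁, M₂, hM₁, hM₂, hM, rfl⟩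
    obtain rfl : M₂ = 1 - M₁ := by rw [← hM, add_sub_cancel_left]
    rw [mul_re_trace_add_mul_re_trace_eq q₁ q₂ hM hρ₂.2, ← hΔdef, ← RCLike.re_to_complex,
      htarget]
    linarith [hΔ.re_trace_mul_le_sum_max_eigenvalues_zero hM₁ hM₂]

/-- Helstrom bound: the maximum of
`q₁ tr(M₁ ρ₁) + q₂ tr(M₂ ρ₂)` over two-outcome POVMs `(M₁, M₂)` equals
`(1 + ‖q₁ ρ₁ − q₂ ρ₂‖₁)/2`, and it is attained. -/
theorem helstrom_bound
    (d : ℕ) (ρ₁ ρ₂ : Matrix (Fin d) (Fin d) ℂ)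
    (hρ₁ : IsDensityMatrix ρ₁) (hρ₂ : IsDensityMatrix ρ₂)
    (q₁ q₂ : ℝ) (hq₁ : 0 ≤ q₁) (hq₂ : 0 ≤ q₂) (hq : q₁ + q₂ = 1) :
    IsGreatest {v : ℝ | ∃ M₁ M₂ : Matrix (Fin d) (Fin d) ℂ,
        M₁.PosSemidef ∧ M₂.PosSemidef ∧ M₁ + M₂ = 1 ∧
        v = q₁ * ((M₁ * ρ₁).trace).re + q₂ * ((M₂ * ρ₂).trace).re}
      ((1 + traceNorm ((q₁ : ℂ) • ρ₁ - (q₂ : ℂ) • ρ₂)) / 2) :=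
  helstrom_bound_general d ρ₁ ρ₂ hρ₁ hρ₂ q₁ q₂ hq
end

section
/- (Three equal-purity qubit states with the origin in their Bloch polytope.) Let f ∈ [0,1], and let v_1, v_2, v_3 ∈ ℝ³ with ‖v_x‖ = f for each x and with the zero vector contained in the convex hull of {v_1, v_2, v_3}. Let ρ_x = (I + v_x·(σ1,σ2,σ3))/2 be the corresponding Bloch states on ℂ². Then the guessing probability for ρ_1, ρ_2, ρ_3 with uniform prior probabilities 1/3 equals (1 + f)/3, independently of any other details (such as the angles) of the three states. -/
open BigOperators Matrix
open scoped ComplexOrder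

/-- An N-outcome POVM: positive semidefinite elements summing to the identity. -/
def IsPOVM {d N : ℕ} (M : Fin N → Matrix (Fin d) (Fin d) ℂ) : Prop :=
  (∀ x, (M x).PosSemidef) ∧ ∑ x, M x = 1

/-- The Bloch state `ρ(v) = (I + v₁σ₁ + v₂σ₂ + v₃σ₃)/2` of a Bloch vector `v ∈ ℝ³`. -/
noncomputable def blochState (v : EuclideanSpace ℝ (Fin 3)) : Matrix (Fin 2) (Fin 2) ℂ :=
  (1 / 2 : ℂ) • ((1 : Matrix (Fin 2) (Fin 2) ℂ)
    + (v 0 : ℂ) • !![0, 1; 1, 0]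
    + (v 1 : ℂ) • !![0, -Complex.I; Complex.I, 0]
    + (v 2 : ℂ) • !![1, 0; 0, -1])

/-!
Writing `ρ(v) = (I + σ·v)/2` with `(σ·v)² = ‖v‖² I`, one gets
`((1 + ‖v‖)/2) I - ρ(v) = ‖v‖ ρ(-v/‖v‖) ⪰ 0`, so `tr (M ρ(v)) ≤ (1 + f)/2 · tr M` for every
POVM element `M`; as the traces of a qubit POVM add up to `2`, the guessing probability is at
most `(1 + f)/3`. Conversely, if `0 = ∑ c_x v_x` is a convex combination, the rank-one
measurement `M_x = 2 c_x ρ(v_x/f)` sums to `I` and attains the bound, since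
`tr (ρ(v/f) ρ(v)) = (1 + f)/2`.
-/

theorem exists_weights_of_mem_convexHull_range {R E ι : Type*} [Field R] [LinearOrder R]
    [IsStrictOrderedRing R] [AddCommGroup E] [Module R E] [Fintype ι] {v : ι → E} {x : E}
    (hx : x ∈ convexHull R (Set.range v)) :
    ∃ c : ι → R, (∀ i, 0 ≤ c i) ∧ ∑ i, c i = 1 ∧ ∑ i, c i • v i = x := by
  classical
  have hv : Set.range v = Fintype.linearCombination R v '' Set.range (Pi.single · 1) := by
    rw [← Set.range_comp]
    congr 1
    ext i
    simp [Fintype.linearCombination_apply_single]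
  rw [hv, ← LinearMap.image_convexHull, convexHull_rangle_single_eq_stdSimplex] at hx
  obtain ⟨c, ⟨hc0, hc1⟩, rfl⟩ := hx
  exact ⟨c, hc0, hc1, (Fintype.linearCombination_apply R v c).symm⟩

theorem NormedSpace.norm_normalize_le {V : Type*} [NormedAddCommGroup V] [NormedSpace ℝ V]
    (x : V) : ‖normalize x‖ ≤ 1 :=
  mem_closedBall_zero_iff.mp (inv_norm_smul_mem_unitClosedBall x)

theorem Matrix.PosSemidef.trace_mul_nonneg_s17 {n 𝕜 : Type*} [Fintype n] [DecidableEq n] [RCLike 𝕜]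
    {A B : Matrix n n 𝕜} (hA : A.PosSemidef) (hB : B.PosSemidef) : 0 ≤ (A * B).trace := by
  open MatrixOrder in obtain ⟨C, rfl⟩ := CStarAlgebra.nonneg_iff_eq_star_mul_self.mp hB.nonneg
  rw [star_eq_conjTranspose, ← mul_assoc, trace_mul_cycle]
  exact (hA.mul_mul_conjTranspose_same C).trace_nonneg

theorem IsPOVM.sum_trace {d N : ℕ} {M : Fin N → Matrix (Fin d) (Fin d) ℂ} (hM : IsPOVM M) :
    ∑ x, (M x).trace = d := by
  rw [← trace_sum, hM.2, trace_one, Fintype.card_fin]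

/-- `σ·v = v₁σ₁ + v₂σ₂ + v₃σ₃`. -/
noncomputable def pauliDot : EuclideanSpace ℝ (Fin 3) →ₗ[ℝ] Matrix (Fin 2) (Fin 2) ℂ where
  toFun v := !![(v 2 : ℂ), v 0 - v 1 * Complex.I; v 0 + v 1 * Complex.I, -(v 2 : ℂ)]
  map_add' u v := by
    ext i j
    fin_cases i <;> fin_cases j <;> simp <;> ring
  map_smul' a v := by
    ext i j
    fin_cases i <;> fin_cases j <;> simp [mul_sub, mul_assoc]

section Pauli

variable (u v : EuclideanSpace ℝ (Fin 3))

theorem pauliDot_apply :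
    pauliDot v = !![(v 2 : ℂ), v 0 - v 1 * Complex.I; v 0 + v 1 * Complex.I, -(v 2 : ℂ)] :=
  rfl

theorem isHermitian_pauliDot : (pauliDot v).IsHermitian := by
  ext i j
  fin_cases i <;> fin_cases j <;> simp [pauliDot_apply, conjTranspose_apply, sub_eq_add_neg]

theorem trace_pauliDot : (pauliDot v).trace = 0 := by
  simp [pauliDot_apply, trace, Fin.sum_univ_two]

theorem trace_pauliDot_mul_pauliDot :
    (pauliDot u * pauliDot v).trace = 2 * (inner ℝ u v : ℝ) := by
  rw [pauliDot_apply, pauliDot_apply, mul_fin_two, trace_fin_two_of,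
    EuclideanSpace.inner_eq_star_dotProduct]
  simp only [dotProduct, Fin.sum_univ_three, star_trivial]
  push_cast
  linear_combination (-2 * u 1 * v 1 : ℂ) * Complex.I_sq

theorem pauliDot_mul_self : pauliDot v * pauliDot v = (‖v‖ ^ 2 : ℝ) • 1 := by
  rw [pauliDot_apply, mul_fin_two, one_fin_two, EuclideanSpace.real_norm_sq_eq, Fin.sum_univ_three]
  ext i j
  fin_cases i <;> fin_cases j <;> simp [mul_comm] <;>
    linear_combination (-(v 1 : ℂ) ^ 2) * Complex.I_sq

theorem norm_smul_pauliDot_normalize :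
    ‖v‖ • pauliDot (NormedSpace.normalize v) = pauliDot v := by
  rw [← map_smul, NormedSpace.norm_smul_normalize]

end Pauli

section Bloch

variable (u v : EuclideanSpace ℝ (Fin 3))

theorem blochState_eq : blochState v = (1 / 2 : ℝ) • (1 + pauliDot v) := by
  ext i j
  fin_cases i <;> fin_cases j <;> (simp [blochState, pauliDot_apply, one_apply]; ring)

theorem isHermitian_blochState : (blochState v).IsHermitian := by
  rw [blochState_eq]
  exact (isHermitian_one.add (isHermitian_pauliDot v)).smul (IsSelfAdjoint.all _)

theorem trace_blochState_mul_blochState :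
    (blochState u * blochState v).trace = ((1 + inner ℝ u v) / 2 : ℝ) := by
  simp only [blochState_eq, smul_mul_smul_comm, add_mul, mul_add, one_mul, mul_one, trace_smul,
    trace_add, trace_one, trace_pauliDot, trace_pauliDot_mul_pauliDot, Fintype.card_fin,
    Complex.real_smul]
  push_cast
  ring

theorem trace_blochState_normalize_mul_blochState :
    (blochState (NormedSpace.normalize v) * blochState v).trace = ((1 + ‖v‖) / 2 : ℝ) := by
  rw [trace_blochState_mul_blochState, NormedSpace.normalize, real_inner_smul_left,
    real_inner_self_eq_norm_sq]
  rcases eq_or_ne ‖v‖ 0 with h | h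
  · simp [h]
  · field_simp

theorem blochState_mul_self_of_norm_eq_one (hu : ‖u‖ = 1) :
    blochState u * blochState u = blochState u := by
  simp only [blochState_eq, smul_mul_smul_comm, add_mul, mul_add, one_mul, mul_one,
    pauliDot_mul_self, hu]
  module

theorem posSemidef_blochState_of_norm_eq_one (hu : ‖u‖ = 1) : (blochState u).PosSemidef := by
  have h := posSemidef_conjTranspose_mul_self (blochState u)
  rwa [(isHermitian_blochState u).eq, blochState_mul_self_of_norm_eq_one u hu] at h

theorem blochState_eq_smul_one_add_norm_smul_blochState_normalize :
    blochState v = ((1 - ‖v‖) / 2 : ℝ) • 1 + ‖v‖ • blochState (NormedSpace.normalize v) := by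
  rw [blochState_eq, blochState_eq]
  linear_combination (norm := module) (-1 / 2 : ℝ) • norm_smul_pauliDot_normalize v

theorem posSemidef_blochState (hv : ‖v‖ ≤ 1) : (blochState v).PosSemidef := by
  rw [blochState_eq_smul_one_add_norm_smul_blochState_normalize]
  refine (PosSemidef.one.smul (by linarith)).add ?_
  obtain rfl | hv0 := eq_or_ne v 0
  · simpa using PosSemidef.zero
  · exact (posSemidef_blochState_of_norm_eq_one _ (NormedSpace.norm_normalize hv0)).smul
      (norm_nonneg v)

theorem smul_one_sub_blochState :
    ((1 + ‖v‖) / 2 : ℝ) • 1 - blochState v = ‖v‖ • blochState (-NormedSpace.normalize v) := by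
  rw [blochState_eq, blochState_eq, map_neg]
  linear_combination (norm := module) (1 / 2 : ℝ) • norm_smul_pauliDot_normalize v

theorem re_trace_mul_blochState_le {M : Matrix (Fin 2) (Fin 2) ℂ} (hM : M.PosSemidef) :
    (M * blochState v).trace.re ≤ (1 + ‖v‖) / 2 * M.trace.re := by
  have h := hM.trace_mul_nonneg_s17 <| (posSemidef_blochState _
    ((norm_neg _).trans_le (NormedSpace.norm_normalize_le v))).smul (norm_nonneg v)
  rw [← smul_one_sub_blochState, mul_sub, trace_sub, Matrix.mul_smul, mul_one, trace_smul] at h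
  simpa using (Complex.le_def.mp h).1

end Bloch

theorem isPOVM_smul_blochState {N : ℕ} {c : Fin N → ℝ} (hc0 : ∀ x, 0 ≤ c x)
    (hc1 : ∑ x, c x = 1) {u : Fin N → EuclideanSpace ℝ (Fin 3)} (hu : ∀ x, ‖u x‖ ≤ 1)
    (hcu : ∑ x, c x • u x = 0) : IsPOVM fun x => (2 * c x) • blochState (u x) := by
  refine ⟨fun x => (posSemidef_blochState _ (hu x)).smul (by linarith [hc0 x]), ?_⟩
  have hc (x) : 2 * c x * (1 / 2) = c x := by ring
  simp only [blochState_eq, smul_smul, smul_add, Finset.sum_add_distrib, ← Finset.sum_smul, hc,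
    ← map_smul, ← map_sum, hcu, hc1, map_zero, one_smul, add_zero]

theorem sum_re_trace_mul_blochState_le {N : ℕ} {M : Fin N → Matrix (Fin 2) (Fin 2) ℂ}
    (hM : IsPOVM M) {f : ℝ} {v : Fin N → EuclideanSpace ℝ (Fin 3)} (hv : ∀ x, ‖v x‖ = f) :
    ∑ x, (M x * blochState (v x)).trace.re ≤ 1 + f :=
  calc ∑ x, (M x * blochState (v x)).trace.re
      ≤ ∑ x, (1 + f) / 2 * (M x).trace.re :=
        Finset.sum_le_sum fun x _ => hv x ▸ re_trace_mul_blochState_le (v x) (hM.1 x)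
    _ = 1 + f := by
        rw [← Finset.mul_sum, ← Complex.re_sum, hM.sum_trace]
        simp

theorem exists_isPOVM_sum_re_trace_mul_blochState_eq {N : ℕ} {f : ℝ}
    {v : Fin N → EuclideanSpace ℝ (Fin 3)} (hv : ∀ x, ‖v x‖ = f)
    (hhull : (0 : EuclideanSpace ℝ (Fin 3)) ∈ convexHull ℝ (Set.range v)) :
    ∃ M, IsPOVM M ∧ ∑ x, (M x * blochState (v x)).trace.re = 1 + f := by
  obtain ⟨c, hc0, hc1, hcv⟩ := exists_weights_of_mem_convexHull_range hhull
  -- `normalize 0 = 0 = 0⁻¹ • 0`, so `f = 0` needs no separate treatment.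
  have hnormalize (x) : NormedSpace.normalize (v x) = f⁻¹ • v x := by
    rw [NormedSpace.normalize, hv]
  refine ⟨_, isPOVM_smul_blochState hc0 hc1 (fun x => NormedSpace.norm_normalize_le (v x)) ?_, ?_⟩
  · simp_rw [hnormalize, smul_comm (c _), ← Finset.smul_sum, hcv, smul_zero]
  · simp_rw [smul_mul, trace_smul, trace_blochState_normalize_mul_blochState, hv,
      Complex.real_smul, ← Complex.ofReal_mul, Complex.ofReal_re, ← Finset.sum_mul,
      ← Finset.mul_sum, hc1]
    ring

theorem three_equal_purity_bloch_states_guessing_probability_general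
    (f : ℝ)
    (v : Fin 3 → EuclideanSpace ℝ (Fin 3))
    (hnorm : ∀ x, ‖v x‖ = f)
    (hhull : (0 : EuclideanSpace ℝ (Fin 3)) ∈ convexHull ℝ (Set.range v)) :
    IsGreatest {w : ℝ | ∃ M : Fin 3 → Matrix (Fin 2) (Fin 2) ℂ, IsPOVM M ∧
        w = ∑ x : Fin 3, (1 / 3 : ℝ) * ((M x * blochState (v x)).trace).re}
      ((1 + f) / 3) := by
  constructor
  · obtain ⟨M, hM, hsum⟩ := exists_isPOVM_sum_re_trace_mul_blochState_eq hnorm hhull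
    exact ⟨M, hM, by rw [← Finset.mul_sum, hsum]; ring⟩
  · rintro w ⟨M, hM, rfl⟩
    have hle := sum_re_trace_mul_blochState_le hM hnorm
    rw [← Finset.mul_sum]
    linarith

/-- three equal-purity qubit states whose Bloch polytope contains the
origin: if `‖v_x‖ = f` for `x = 1, 2, 3` and `0` lies in the convex hull of the three
Bloch vectors, then the guessing probability with uniform priors `1/3` is `(1 + f)/3`. -/
theorem three_equal_purity_bloch_states_guessing_probability
    (f : ℝ) (hf : f ∈ Set.Icc (0 : ℝ) 1)
    (v : Fin 3 → EuclideanSpace ℝ (Fin 3))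
    (hnorm : ∀ x, ‖v x‖ = f)
    (hhull : (0 : EuclideanSpace ℝ (Fin 3)) ∈ convexHull ℝ (Set.range v)) :
    IsGreatest {w : ℝ | ∃ M : Fin 3 → Matrix (Fin 2) (Fin 2) ℂ, IsPOVM M ∧
        w = ∑ x : Fin 3, (1 / 3 : ℝ) * ((M x * blochState (v x)).trace).re}
      ((1 + f) / 3) :=
  three_equal_purity_bloch_states_guessing_probability_general f v hnorm hhull
end
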